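/- arXiv:2205.13941 — 3 statements merged into one kernel-verified Lean document; each statement's English description precedes it below -/
import Mathlib

section
/- For n×n real symmetric positive semidefinite matrices A, B with A ≥ B (meaning A - B is positive semidefinite) and tr(A) > 0, and for α > 1, the sandwiched Rényi divergence D_α(A‖B) := (1/(α-1)) · log( (1/tr A) · tr[(B^{(1-α)/(2α)} A B^{(1-α)/(2α)})^α] ) is nonnegative, provided the kernel of B is contained in the kernel of A. -/
/-!
Put `S = B ^ ((1 - α) / (2 α))` and `N = B ^ ((α - 1) / α)`. Then `S N S` is the support
projection of `B`, which fixes `A` because `ker B ⊆ ker A`, so `tr A = tr (S A S N)`. The matrix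
Hölder inequality with exponents `α` and `α / (α - 1)` bounds this by
`(tr (S A S) ^ α) ^ (1 / α) (tr B) ^ (1 - 1 / α)`, and `tr B ≤ tr A` then gives
`tr A ≤ tr (S A S) ^ α`: the argument of the logarithm is at least `1`.

Matrix Hölder reduces to the scalar one after diagonalising both factors: the squared entries of
the orthogonal change of basis between the two eigenbases form a doubly stochastic matrix, and
Jensen's inequality for it bounds the diagonal of `N` in the eigenbasis of `S A S`.
-/

open Matrix

noncomputable def mpow {m : Type*} [Fintype m] [DecidableEq m] (A : Matrix m m ℝ) (r : ℝ) :
    Matrix m m ℝ :=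
  if hA : A.IsHermitian then
    (hA.eigenvectorUnitary : Matrix m m ℝ) *
      Matrix.diagonal (fun i => (hA.eigenvalues i : ℝ) ^ r) *
      star (hA.eigenvectorUnitary : Matrix m m ℝ)
  else 0

/-- Sandwiched quantum Rényi divergence of order `α`. -/
noncomputable def sandwichedRenyi {m : Type*} [Fintype m] [DecidableEq m]
    (α : ℝ) (A B : Matrix m m ℝ) : ℝ :=
  (α - 1)⁻¹ *
    Real.log ((mpow (mpow B ((1 - α) / (2 * α)) * A * mpow B ((1 - α) / (2 * α))) α).trace
      / A.trace)

/-- Regularized sandwiched quantum Rényi divergence `D_{α,λ}(A‖B) := D_α(A‖B + λI)`. -/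
noncomputable def regRenyi {m : Type*} [Fintype m] [DecidableEq m]
    (α lam : ℝ) (A B : Matrix m m ℝ) : ℝ :=
  sandwichedRenyi α A (B + lam • 1)

namespace Matrix

variable {n : Type*} [Fintype n] [DecidableEq n]

lemma mpow_eq_cfc (A : Matrix n n ℝ) (r : ℝ) : mpow A r = cfc (fun x : ℝ => x ^ r) A := by
  by_cases hA : A.IsHermitian
  · rw [hA.cfc_eq, mpow, dif_pos hA, IsHermitian.cfc, Unitary.conjStarAlgAut_apply]
    rfl
  · rw [mpow, dif_neg hA, cfc_apply_of_not_predicate (p := IsSelfAdjoint) A hA]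

lemma continuousOn_spectrum (f : ℝ → ℝ) (A : Matrix n n ℝ) : ContinuousOn f (spectrum ℝ A) :=
  A.finite_real_spectrum.continuousOn f

lemma PosSemidef.nonneg_of_mem_spectrum {A : Matrix n n ℝ} (hA : A.PosSemidef) {x : ℝ}
    (hx : x ∈ spectrum ℝ A) : 0 ≤ x := by
  obtain ⟨i, rfl⟩ := hA.isHermitian.spectrum_real_eq_range_eigenvalues ▸ hx
  exact hA.eigenvalues_nonneg i

lemma IsHermitian.trace_cfc {A : Matrix n n ℝ} (hA : A.IsHermitian) (f : ℝ → ℝ) :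
    (cfc f A).trace = ∑ i, f (hA.eigenvalues i) := by
  rw [hA.cfc_eq, IsHermitian.cfc, Unitary.conjStarAlgAut_apply, trace_mul_cycle,
    Unitary.coe_star_mul_self, one_mul, trace_diagonal]
  rfl

lemma isHermitian_mpow (A : Matrix n n ℝ) (r : ℝ) : (mpow A r).IsHermitian := by
  rw [mpow_eq_cfc]; exact cfc_predicate _ A

lemma posSemidef_mpow {A : Matrix n n ℝ} (hA : A.PosSemidef) (r : ℝ) : (mpow A r).PosSemidef := by
  rw [mpow, dif_pos hA.isHermitian, star_eq_conjTranspose]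
  exact (posSemidef_diagonal_iff.2 fun i => Real.rpow_nonneg (hA.eigenvalues_nonneg i) r)
    |>.mul_mul_conjTranspose_same _

lemma IsHermitian.trace_mpow {A : Matrix n n ℝ} (hA : A.IsHermitian) (r : ℝ) :
    (mpow A r).trace = ∑ i, hA.eigenvalues i ^ r := by
  rw [mpow_eq_cfc, hA.trace_cfc]

lemma IsHermitian.mpow_one {A : Matrix n n ℝ} (hA : A.IsHermitian) : mpow A 1 = A := by
  simp only [mpow_eq_cfc, Real.rpow_one]
  exact cfc_id' ℝ A hA

lemma PosSemidef.mpow_mul_mpow {A : Matrix n n ℝ} (hA : A.PosSemidef) {r s : ℝ}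
    (hrs : r + s ≠ 0) : mpow A r * mpow A s = mpow A (r + s) := by
  simp only [mpow_eq_cfc]
  rw [← cfc_mul _ _ A (continuousOn_spectrum _ A) (continuousOn_spectrum _ A)]
  exact cfc_congr fun x hx => (Real.rpow_add' (hA.nonneg_of_mem_spectrum hx) hrs).symm

lemma PosSemidef.mpow_mpow {A : Matrix n n ℝ} (hA : A.PosSemidef) (r s : ℝ) :
    mpow (mpow A r) s = mpow A (r * s) := by
  simp only [mpow_eq_cfc]
  rw [← cfc_comp' _ _ A ((A.finite_real_spectrum.image _).continuousOn _)
    (continuousOn_spectrum _ A) hA.isHermitian.isSelfAdjoint]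
  exact cfc_congr fun x hx => (Real.rpow_mul (hA.nonneg_of_mem_spectrum hx) r s).symm

lemma PosSemidef.mul_mpow_neg_mul_mpow {A : Matrix n n ℝ} (hA : A.PosSemidef) (r : ℝ) :
    A * (mpow A (-r) * mpow A r) = A := by
  simp only [mpow_eq_cfc]
  rw [← cfc_mul _ _ A (continuousOn_spectrum _ A) (continuousOn_spectrum _ A)]
  conv_lhs => enter [1]; rw [← cfc_id' ℝ A hA.isHermitian.isSelfAdjoint]
  rw [← cfc_mul _ _ A (continuousOn_spectrum _ A) (continuousOn_spectrum _ A)]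
  refine (cfc_congr fun x hx => ?_).trans (cfc_id' ℝ A hA.isHermitian.isSelfAdjoint)
  rcases (hA.nonneg_of_mem_spectrum hx).eq_or_lt with rfl | hx0
  · simp
  · simp [← Real.rpow_add hx0]

lemma mul_eq_zero_of_ker_le {R : Type*} [NonUnitalNonAssocSemiring R] {l m k : Type*} [Fintype m]
    {A B : Matrix l m R} {X : Matrix m k R} (hker : ∀ v, B *ᵥ v = 0 → A *ᵥ v = 0)
    (hBX : B * X = 0) : A * X = 0 := by
  ext i j
  exact congrFun (hker (fun k => X k j) (funext fun i => congrFun (congrFun hBX i) j)) i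

lemma PosSemidef.mul_mpow_neg_mul_mpow_of_ker_le {A B : Matrix n n ℝ} (hB : B.PosSemidef)
    (hker : ∀ v, B *ᵥ v = 0 → A *ᵥ v = 0) (r : ℝ) : A * (mpow B (-r) * mpow B r) = A := by
  have h : A * (1 - mpow B (-r) * mpow B r) = 0 :=
    mul_eq_zero_of_ker_le hker (by rw [mul_sub, mul_one, hB.mul_mpow_neg_mul_mpow, sub_self])
  rwa [mul_sub, mul_one, sub_eq_zero, eq_comm] at h

lemma PosSemidef.trace_mpow_mul_mul_mpow_mul_mpow {A B : Matrix n n ℝ} (hB : B.PosSemidef)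
    (hker : ∀ v, B *ᵥ v = 0 → A *ᵥ v = 0) {r : ℝ} (hr : r ≠ 0) :
    (mpow B r * A * mpow B r * mpow B (-2 * r)).trace = A.trace :=
  calc (mpow B r * A * mpow B r * mpow B (-2 * r)).trace
      = (mpow B r * (A * (mpow B r * mpow B (-2 * r)))).trace := by simp only [mul_assoc]
    _ = (A * (mpow B (-r) * mpow B r)).trace := by
        rw [trace_mul_comm, hB.mpow_mul_mpow fun h => hr (by linarith), mul_assoc,
          show r + -2 * r = -r by ring]
    _ = A.trace := by rw [hB.mul_mpow_neg_mul_mpow_of_ker_le hker]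

lemma IsHermitian.eq_mul_diagonal_mul_star {A : Matrix n n ℝ} (hA : A.IsHermitian) :
    A = (hA.eigenvectorUnitary : Matrix n n ℝ) * diagonal hA.eigenvalues *
      star (hA.eigenvectorUnitary : Matrix n n ℝ) :=
  hA.spectral_theorem

lemma of_sq_mem_doublyStochastic {C : Matrix n n ℝ} (hC : C ∈ unitaryGroup n ℝ) :
    of (fun i j => C i j ^ 2) ∈ doublyStochastic ℝ n := by
  refine mem_doublyStochastic_iff_sum.2 ⟨fun i j => sq_nonneg _, fun i => ?_, fun j => ?_⟩
  · simpa [mul_apply, sq] using congrFun (congrFun (mem_unitaryGroup_iff.1 hC) i) i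
  · simpa [mul_apply, sq] using congrFun (congrFun (mem_unitaryGroup_iff'.1 hC) j) j

lemma _root_.ConvexOn.sum_map_mulVec_le {s : Set ℝ} {f : ℝ → ℝ} (hf : ConvexOn ℝ s f)
    {D : Matrix n n ℝ} (hD : D ∈ doublyStochastic ℝ n) {x : n → ℝ} (hx : ∀ j, x j ∈ s) :
    ∑ i, f ((D *ᵥ x) i) ≤ ∑ j, f (x j) :=
  calc ∑ i, f ((D *ᵥ x) i) ≤ ∑ i, ∑ j, D i j * f (x j) := Finset.sum_le_sum fun i _ => by
        simpa [mulVec, dotProduct] using hf.map_sum_le (t := Finset.univ) (w := D i) (p := x)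
          (fun j _ => nonneg_of_mem_doublyStochastic hD) (sum_row_of_mem_doublyStochastic hD i)
          (fun j _ => hx j)
    _ = ∑ j, f (x j) := by
        rw [Finset.sum_comm]
        simp only [← Finset.sum_mul, sum_col_of_mem_doublyStochastic hD, one_mul]

lemma trace_conj_diagonal_mul_conj_diagonal (V U : unitaryGroup n ℝ) (a b : n → ℝ) :
    ((V : Matrix n n ℝ) * diagonal a * star (V : Matrix n n ℝ) *
        ((U : Matrix n n ℝ) * diagonal b * star (U : Matrix n n ℝ))).trace =
      ∑ i, a i * (of (fun i j => (star (V : Matrix n n ℝ) * U) i j ^ 2) *ᵥ b) i := by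
  set C : Matrix n n ℝ := star (V : Matrix n n ℝ) * U
  calc _ = ((V : Matrix n n ℝ) *
        (diagonal a * (C * diagonal b * star (U : Matrix n n ℝ)))).trace := by
        simp only [C, mul_assoc]
    _ = (diagonal a * (C * diagonal b * star C)).trace := by
        rw [trace_mul_comm]; simp only [C, star_mul, star_star, mul_assoc]
    _ = _ := by
        refine Finset.sum_congr rfl fun i _ => ?_
        rw [diag_apply, diagonal_mul, mul_apply]
        simp only [mul_diagonal, star_apply, star_trivial, mulVec, dotProduct, of_apply]
        congr 1
        exact Finset.sum_congr rfl fun j _ => by ring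

theorem PosSemidef.trace_mul_le {M N : Matrix n n ℝ} (hM : M.PosSemidef) (hN : N.PosSemidef)
    {p q : ℝ} (hpq : p.HolderConjugate q) :
    (M * N).trace ≤ (mpow M p).trace ^ (1 / p) * (mpow N q).trace ^ (1 / q) := by
  set μ := hM.isHermitian.eigenvalues
  set ν := hN.isHermitian.eigenvalues
  set D := of fun i j => (star (hM.isHermitian.eigenvectorUnitary : Matrix n n ℝ) *
    hN.isHermitian.eigenvectorUnitary) i j ^ 2
  have hD : D ∈ doublyStochastic ℝ n :=
    of_sq_mem_doublyStochastic (mul_mem (Unitary.star_mem (SetLike.coe_mem _)) (SetLike.coe_mem _))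
  have hDν : ∀ i, 0 ≤ (D *ᵥ ν) i := fun i => Finset.sum_nonneg fun j _ =>
    mul_nonneg (nonneg_of_mem_doublyStochastic hD) (hN.eigenvalues_nonneg j)
  have htrace : (M * N).trace = ∑ i, μ i * (D *ᵥ ν) i := by
    conv_lhs =>
      rw [hM.isHermitian.eq_mul_diagonal_mul_star, hN.isHermitian.eq_mul_diagonal_mul_star]
    exact trace_conj_diagonal_mul_conj_diagonal _ _ _ _
  rw [htrace, hM.isHermitian.trace_mpow, hN.isHermitian.trace_mpow]
  calc ∑ i, μ i * (D *ᵥ ν) i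
      ≤ (∑ i, μ i ^ p) ^ (1 / p) * (∑ i, (D *ᵥ ν) i ^ q) ^ (1 / q) :=
        Real.inner_le_Lp_mul_Lq_of_nonneg _ hpq (fun i _ => hM.eigenvalues_nonneg i)
          (fun i _ => hDν i)
    _ ≤ (∑ i, μ i ^ p) ^ (1 / p) * (∑ j, ν j ^ q) ^ (1 / q) := by
        refine mul_le_mul_of_nonneg_left (Real.rpow_le_rpow
          (Finset.sum_nonneg fun i _ => Real.rpow_nonneg (hDν i) q) ?_ hpq.symm.one_div_nonneg)
          (Real.rpow_nonneg (Finset.sum_nonneg fun i _ =>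
            Real.rpow_nonneg (hM.eigenvalues_nonneg i) p) _)
        exact (convexOn_rpow hpq.symm.lt.le).sum_map_mulVec_le hD fun j => hN.eigenvalues_nonneg j

end Matrix

lemma Real.le_of_le_rpow_one_div_mul_rpow_one_div {a x p q : ℝ} (hpq : p.HolderConjugate q)
    (ha : 0 < a) (hx : 0 ≤ x) (h : a ≤ x ^ (1 / p) * a ^ (1 / q)) : a ≤ x := by
  have hsplit : a = a ^ (1 / p) * a ^ (1 / q) := by
    rw [← Real.rpow_add ha, hpq.one_div_add_one_div, div_one, Real.rpow_one]
  have h' : a ^ (1 / p) * a ^ (1 / q) ≤ x ^ (1 / p) * a ^ (1 / q) := by rwa [← hsplit]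
  exact (Real.rpow_le_rpow_iff ha.le hx hpq.one_div_pos).1
    (le_of_mul_le_mul_right h' (Real.rpow_pos_of_pos ha _))

/-- Order property: if `A ≥ B ≥ 0` with `tr A > 0`, `ker B ⊆ ker A` and `α > 1`, then the
sandwiched quantum Rényi divergence `D_α(A‖B)` is nonnegative. -/
theorem sandwichedRenyi_nonneg_of_le {n : Type*} [Fintype n] [DecidableEq n]
    (α : ℝ) (hα : 1 < α) (A B : Matrix n n ℝ)
    (hA : A.PosSemidef) (hB : B.PosSemidef) (hAB : (A - B).PosSemidef)
    (htr : 0 < A.trace)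
    (hker : ∀ v, B *ᵥ v = 0 → A *ᵥ v = 0) :
    0 ≤ sandwichedRenyi α A B := by
  set r := (1 - α) / (2 * α)
  have hr : r ≠ 0 := (div_neg_of_neg_of_pos (by linarith) (by linarith)).ne
  have hpq : α.HolderConjugate (α / (α - 1)) := (Real.holderConjugate_iff_eq_conjExponent hα).2 rfl
  have hα0 : α ≠ 0 := by linarith
  have hα1 : α - 1 ≠ 0 := by linarith
  set M := mpow B r * A * mpow B r
  have hM : M.PosSemidef := by
    have h := hA.mul_mul_conjTranspose_same (mpow B r)
    rwa [(isHermitian_mpow B r).eq] at h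
  have hNq : mpow (mpow B (-2 * r)) (α / (α - 1)) = B := by
    rw [hB.mpow_mpow, show -2 * r * (α / (α - 1)) = 1 by simp only [r]; field_simp; ring,
      hB.isHermitian.mpow_one]
  have hBA : B.trace ≤ A.trace := by linarith [hAB.trace_nonneg, trace_sub A B]
  have hMα : 0 ≤ (mpow M α).trace := (posSemidef_mpow hM α).trace_nonneg
  have key : A.trace ≤ (mpow M α).trace := by
    refine Real.le_of_le_rpow_one_div_mul_rpow_one_div hpq htr hMα ?_
    calc A.trace = (M * mpow B (-2 * r)).trace :=
          (hB.trace_mpow_mul_mul_mpow_mul_mpow hker hr).symm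
      _ ≤ (mpow M α).trace ^ (1 / α) * B.trace ^ (1 / (α / (α - 1))) := by
          simpa only [hNq] using hM.trace_mul_le (posSemidef_mpow hB (-2 * r)) hpq
      _ ≤ (mpow M α).trace ^ (1 / α) * A.trace ^ (1 / (α / (α - 1))) :=
          mul_le_mul_of_nonneg_left (Real.rpow_le_rpow hB.trace_nonneg hBA
            hpq.symm.one_div_nonneg) (Real.rpow_nonneg hMα _)
  unfold sandwichedRenyi
  exact mul_nonneg (inv_nonneg.2 (by linarith)) (Real.log_nonneg ((one_le_div htr).2 key))
end

section
/- Let p, q be probability measures on a measurable space X and suppose p(S) ≤ e^ε q(S) + δ/2 for all measurable S. Let φ : X → H be a measurable map into a Hilbert space with ‖φ(x)‖ ≤ 1 for all x, and set Σ_p = ∫ φ(x)φ(x)* dp(x), Σ_q = ∫ φ(x)φ(x)* dq(x). Then Σ_p ≤ e^ε Σ_q + δ·Id in the Loewner order, i.e. ⟨f, Σ_p f⟩ ≤ e^ε ⟨f, Σ_q f⟩ + δ‖f‖² for all f ∈ H. -/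
/-!
Since `0 ≤ ⟨f, φ x⟩² ≤ ‖f‖²`, the layer-cake formula writes `∫ ⟨f, φ x⟩² dp` as
`∫₀^{‖f‖²} p{x | t ≤ ⟨f, φ x⟩²} dt`. Applying the hypothesis to each level set and integrating over
`t ∈ (0, ‖f‖²]` gives `∫ ⟨f, φ x⟩² dp ≤ e^ε ∫ ⟨f, φ x⟩² dq + (δ / 2) ‖f‖²`.
-/

open MeasureTheory Set

section LayerCake

variable {X : Type*} [MeasurableSpace X]

lemma integrableOn_Ioc_measureReal_le (μ : Measure X) [IsFiniteMeasure μ] (T : X → ℝ) {M : ℝ}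
    (hM : 0 ≤ M) : IntegrableOn (fun t => μ.real {x | t ≤ T x}) (Ioc 0 M) := by
  have hanti : Antitone fun t => μ.real {x | t ≤ T x} :=
    fun _ _ hst => measureReal_mono fun _ hx => hst.trans hx
  exact (intervalIntegrable_iff_integrableOn_Ioc_of_le hM).mp hanti.intervalIntegrable

theorem integral_le_mul_integral_add_of_measureReal_le {μ ν : Measure X} [IsFiniteMeasure μ]
    [IsFiniteMeasure ν] {a c M : ℝ} {T : X → ℝ} (hT : Measurable T) (hT0 : ∀ x, 0 ≤ T x)
    (hTM : ∀ x, T x ≤ M) (hM : 0 ≤ M)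
    (h : ∀ S, MeasurableSet S → μ.real S ≤ a * ν.real S + c) :
    ∫ x, T x ∂μ ≤ a * ∫ x, T x ∂ν + c * M := by
  have layerCake (ρ : Measure X) [IsFiniteMeasure ρ] :
      ∫ x, T x ∂ρ = ∫ t in Ioc 0 M, ρ.real {x | t ≤ T x} := by
    refine Integrable.integral_eq_integral_Ioc_meas_le ?_ (.of_forall hT0) (.of_forall hTM)
    refine .of_bound hT.aestronglyMeasurable M (.of_forall fun x => ?_)
    rw [Real.norm_of_nonneg (hT0 x)]
    exact hTM x
  have hνa := (integrableOn_Ioc_measureReal_le ν T hM).const_mul a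
  calc ∫ x, T x ∂μ = ∫ t in Ioc 0 M, μ.real {x | t ≤ T x} := layerCake μ
    _ ≤ ∫ t in Ioc 0 M, (a * ν.real {x | t ≤ T x} + c) :=
      setIntegral_mono_on (integrableOn_Ioc_measureReal_le μ T hM)
        (hνa.add (integrableOn_const measure_Ioc_lt_top.ne)) measurableSet_Ioc
        fun t _ => h _ (measurableSet_le measurable_const hT)
    _ = a * ∫ x, T x ∂ν + c * M := by
      rw [integral_add hνa (integrableOn_const measure_Ioc_lt_top.ne), integral_const_mul,
        setIntegral_const, Real.volume_real_Ioc_of_le hM, sub_zero, smul_eq_mul, mul_comm M,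
        layerCake ν]

end LayerCake

lemma sq_real_inner_le_sq_norm {H : Type*} [NormedAddCommGroup H] [InnerProductSpace ℝ H]
    (f : H) {v : H} (hv : ‖v‖ ≤ 1) : inner ℝ f v ^ 2 ≤ ‖f‖ ^ 2 := by
  have hfv : |inner ℝ f v| ≤ ‖f‖ :=
    (abs_real_inner_le_norm f v).trans (mul_le_of_le_one_right (norm_nonneg f) hv)
  exact sq_le_sq' (abs_le.mp hfv).1 (abs_le.mp hfv).2

theorem dp_implies_loewner_general {X : Type*} [MeasurableSpace X]
    {H : Type*} [NormedAddCommGroup H] [InnerProductSpace ℝ H]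
    [MeasurableSpace H] [BorelSpace H]
    (p q : Measure X) [IsProbabilityMeasure p] [IsProbabilityMeasure q]
    (ε δ : ℝ) (hδ : 0 < δ)
    (hdp : ∀ S : Set X, MeasurableSet S → (p S).toReal ≤ Real.exp ε * (q S).toReal + δ / 2)
    (φ : X → H) (hφm : Measurable φ) (hφ : ∀ x, ‖φ x‖ ≤ 1) (f : H) :
    ∫ x, (inner ℝ f (φ x) : ℝ) ^ 2 ∂p
      ≤ Real.exp ε * ∫ x, (inner ℝ f (φ x) : ℝ) ^ 2 ∂q + δ * ‖f‖ ^ 2 := by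
  have hT : Measurable fun x => inner ℝ f (φ x) ^ 2 :=
    ((innerSL ℝ f).continuous.measurable.comp hφm).pow_const 2
  have hhalf := integral_le_mul_integral_add_of_measureReal_le hT (fun x => sq_nonneg _)
    (fun x => sq_real_inner_le_sq_norm f (hφ x)) (sq_nonneg ‖f‖) hdp
  have hslack : δ / 2 * ‖f‖ ^ 2 ≤ δ * ‖f‖ ^ 2 := by gcongr; linarith
  linarith

/-- If `p(S) ≤ e^ε q(S) + δ/2` for all measurable `S` and `‖φ(x)‖ ≤ 1`, then
`Σ_p ≤ e^ε Σ_q + δ·Id` in the Loewner order, i.e.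
`⟨f, Σ_p f⟩ ≤ e^ε ⟨f, Σ_q f⟩ + δ‖f‖²` for all `f`, where
`⟨f, Σ_p f⟩ = ∫ ⟨f, φ(x)⟩² dp(x)`. -/
theorem dp_implies_loewner {X : Type*} [MeasurableSpace X]
    {H : Type*} [NormedAddCommGroup H] [InnerProductSpace ℝ H]
    [MeasurableSpace H] [BorelSpace H]
    (p q : Measure X) [IsProbabilityMeasure p] [IsProbabilityMeasure q]
    (ε δ : ℝ) (hε : 0 < ε) (hδ : 0 < δ)
    (hdp : ∀ S : Set X, MeasurableSet S → (p S).toReal ≤ Real.exp ε * (q S).toReal + δ / 2)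
    (φ : X → H) (hφm : Measurable φ) (hφ : ∀ x, ‖φ x‖ ≤ 1) (f : H) :
    ∫ x, (inner ℝ f (φ x) : ℝ) ^ 2 ∂p
      ≤ Real.exp ε * ∫ x, (inner ℝ f (φ x) : ℝ) ^ 2 ∂q + δ * ‖f‖ ^ 2 :=
  dp_implies_loewner_general p q ε δ hδ hdp φ hφm hφ f
end

section
/- Layer-cake step: if T : X → [0,1] is measurable, p, q are probability measures, and ∫ T dp − e^ε ∫ T dq − δ > 0, then there exists s ∈ [0,1] such that the set S = {x : T(x) ≥ s} satisfies p(S) > e^ε q(S) + δ. -/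
/-! By the layer-cake formula, `∫ T dp - e^ε ∫ T dq - δ` is the integral over `s ∈ (0, 1]` of
`p {T ≥ s} - e^ε q {T ≥ s} - δ`; since this integral is positive, so is the integrand at some `s`. -/

open MeasureTheory Set

section LayerCake

variable {X : Type*} [MeasurableSpace X]

theorem exists_pos_of_setIntegral_pos {μ : Measure X} {f : X → ℝ} {s : Set X}
    (hs : MeasurableSet s) (h : 0 < ∫ x in s, f x ∂μ) : ∃ x ∈ s, 0 < f x := by
  by_contra! hf
  exact h.not_ge (setIntegral_nonpos hs hf)

theorem antitone_measureReal_setOf_le (μ : Measure X) [IsFiniteMeasure μ] (T : X → ℝ) :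
    Antitone fun s : ℝ => μ.real {x | s ≤ T x} :=
  fun _ _ hst => measureReal_mono fun _ hx => le_trans hst hx

theorem integrableOn_Ioc_measureReal_setOf_le (μ : Measure X) [IsFiniteMeasure μ] (T : X → ℝ)
    (a b : ℝ) : IntegrableOn (fun s : ℝ => μ.real {x | s ≤ T x}) (Ioc a b) :=
  (antitone_measureReal_setOf_le μ T).intervalIntegrable.1

theorem integral_eq_setIntegral_Ioc_measureReal_setOf_le (μ : Measure X) [IsFiniteMeasure μ]
    {T : X → ℝ} (hT : Measurable T) (hT0 : ∀ x, 0 ≤ T x) (hT1 : ∀ x, T x ≤ 1) :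
    ∫ x, T x ∂μ = ∫ s in Ioc 0 1, μ.real {x | s ≤ T x} := by
  have hT_int : Integrable T μ :=
    (integrable_const 1).mono' hT.aestronglyMeasurable
      (ae_of_all μ fun x => by rw [Real.norm_of_nonneg (hT0 x)]; exact hT1 x)
  exact hT_int.integral_eq_integral_Ioc_meas_le (ae_of_all μ hT0) (ae_of_all μ hT1)

end LayerCake

theorem layer_cake_level_set_general {X : Type*} [MeasurableSpace X]
    (p q : Measure X) [IsProbabilityMeasure p] [IsProbabilityMeasure q]
    (T : X → ℝ) (hT : Measurable T) (hT0 : ∀ x, 0 ≤ T x) (hT1 : ∀ x, T x ≤ 1)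
    (ε δ : ℝ)
    (h : 0 < ∫ x, T x ∂p - Real.exp ε * ∫ x, T x ∂q - δ) :
    ∃ s ∈ Set.Icc (0 : ℝ) 1,
      Real.exp ε * (q {x | s ≤ T x}).toReal + δ < (p {x | s ≤ T x}).toReal := by
  have hp_int := integrableOn_Ioc_measureReal_setOf_le p T 0 1
  have hq_int := (integrableOn_Ioc_measureReal_setOf_le q T 0 1).const_mul (Real.exp ε)
  have hdiff_int : IntegrableOn
      (fun s => p.real {x | s ≤ T x} - Real.exp ε * q.real {x | s ≤ T x}) (Ioc 0 1) :=
    hp_int.sub hq_int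
  have h_layer : ∫ x, T x ∂p - Real.exp ε * ∫ x, T x ∂q - δ =
      ∫ s in Ioc 0 1, (p.real {x | s ≤ T x} - Real.exp ε * q.real {x | s ≤ T x} - δ) := by
    rw [integral_sub hdiff_int (integrable_const δ), integral_sub hp_int hq_int,
      integral_const_mul, setIntegral_const, Real.volume_real_Ioc_of_le zero_le_one,
      integral_eq_setIntegral_Ioc_measureReal_setOf_le p hT hT0 hT1,
      integral_eq_setIntegral_Ioc_measureReal_setOf_le q hT hT0 hT1]
    simp
  obtain ⟨s, hs, hpos⟩ := exists_pos_of_setIntegral_pos measurableSet_Ioc (h_layer ▸ h)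
  exact ⟨s, Ioc_subset_Icc_self hs, by simp only [measureReal_def] at hpos; linarith⟩

/-- Layer-cake step: if `T : X → [0,1]` is measurable and
`∫ T dp − e^ε ∫ T dq − δ > 0`, then some super-level set `S = {x : T(x) ≥ s}` satisfies
`p(S) > e^ε q(S) + δ`. -/
theorem layer_cake_level_set {X : Type*} [MeasurableSpace X]
    (p q : Measure X) [IsProbabilityMeasure p] [IsProbabilityMeasure q]
    (T : X → ℝ) (hT : Measurable T) (hT0 : ∀ x, 0 ≤ T x) (hT1 : ∀ x, T x ≤ 1)
    (ε δ : ℝ) (hδ : 0 < δ)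
    (h : 0 < ∫ x, T x ∂p - Real.exp ε * ∫ x, T x ∂q - δ) :
    ∃ s ∈ Set.Icc (0 : ℝ) 1,
      Real.exp ε * (q {x | s ≤ T x}).toReal + δ < (p {x | s ≤ T x}).toReal :=
  layer_cake_level_set_general p q T hT hT0 hT1 ε δ h
end
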